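/- Suppose I contains a distinguished vertex ∞, let N = 2, and let (a^V,e^V) and (a^W,e^W) be A-module structures on I×{0,1,2}-graded spaces V and W with dim V_{i,n} = dim W_{i,n} for all (i,n), dim V_{∞,n} = 1 for all n, and every e^V_{i,n} invertible. Let θ' : ℤ^{I×{0,1,2}} → ℚ be a linear functional with θ'(dim V) = 0, and assume V and W are both θ'-stable. Then the composite of ∂₁ : E(V₀,W₁) → L(V₀,W₂) with the projection L(V₀,W₂) → ⊕_{i∈I, i≠∞} Hom(V_{i,0},W_{i,2}) is surjective. -/
import Mathlib


noncomputable section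

open Module

/-- Cast of graded components of an `I × ℕ`-graded family of `ℂ`-vector spaces along an
equality of vertices. -/
def lcastN {I : Type} (V : I → ℕ → Type)
    [∀ i n, AddCommGroup (V i n)] [∀ i n, Module ℂ (V i n)]
    (n : ℕ) {i j : I} (hij : i = j) : V i n ≃ₗ[ℂ] V j n := by
  subst hij; exact LinearEquiv.refl ℂ (V i n)

section Maps

variable {I H : Type} [DecidableEq I] [Fintype H]
  (s t : H → I) (bar : H → H)
  (s_bar : ∀ h, s (bar h) = t h) (t_bar : ∀ h, t (bar h) = s h)
  (eps : H → ℤ)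
  (V W : I → ℕ → Type)
  [∀ i n, AddCommGroup (V i n)] [∀ i n, Module ℂ (V i n)]
  [∀ i n, AddCommGroup (W i n)] [∀ i n, Module ℂ (W i n)]
  (aV : ∀ (h : H) (n : ℕ), V (s h) n →ₗ[ℂ] V (t h) (n + 1))
  (aW : ∀ (h : H) (n : ℕ), W (s h) n →ₗ[ℂ] W (t h) (n + 1))
  (eW : ∀ (i : I) (n : ℕ), W i n →ₗ[ℂ] W i (n + 1))
  (eVinv : ∀ (i : I) (n : ℕ), V i (n + 1) →ₗ[ℂ] V i n)

/-- The map `∂₁ : E(V₀,W₁) → L(V₀,W₂)`,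
`∂₁(ψ)_k = Σ_{h : t(h) = k} ε(h)( a^W_{h,1}∘ψ_{h̄} + e^W_{k,1}∘ψ_h∘(e^V_{s(h),0})⁻¹∘a^V_{h̄,0} )`. -/
def d1 (ψ : ∀ h, V (s h) 0 →ₗ[ℂ] W (t h) 1) : ∀ k, V k 0 →ₗ[ℂ] W k 2 :=
  fun k => ∑ h : H, if hk : t h = k then
    (eps h : ℂ) • ((lcastN W 2 hk).toLinearMap ∘ₗ
      (aW h 1 ∘ₗ (lcastN W 1 (t_bar h)).toLinearMap ∘ₗ ψ (bar h)
        + eW (t h) 1 ∘ₗ ψ h ∘ₗ eVinv (s h) 0 ∘ₗ (lcastN V 1 (t_bar h)).toLinearMap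
            ∘ₗ aV (bar h) 0)
      ∘ₗ (lcastN V 0 ((s_bar h).trans hk)).symm.toLinearMap)
  else 0

end Maps

/-- The value of the linear functional on `ℤ^{I×{0,1,2}}` with coefficients `θc`. -/
def thetaVal {I : Type} [Fintype I] (θc : I → ℕ → ℚ) (d : I → ℕ → ℤ) : ℚ :=
  ∑ i : I, ∑ n ∈ Finset.range 3, θc i n * (d i n : ℚ)

/-! ### Auxiliary lemmas on casts -/

section CastLemmas

variable {I : Type} (V W : I → ℕ → Type)
    [∀ i n, AddCommGroup (V i n)] [∀ i n, Module ℂ (V i n)]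
    [∀ i n, AddCommGroup (W i n)] [∀ i n, Module ℂ (W i n)]

@[simp] lemma lcastN_self (n : ℕ) {i : I} (p : i = i) (x : V i n) : lcastN V n p x = x := rfl

@[simp] lemma lcastN_symm_apply (n : ℕ) {i j : I} (p : i = j) (x : V j n) :
    (lcastN V n p).symm x = lcastN V n p.symm x := by subst p; rfl

@[simp] lemma lcastN_lcastN (n : ℕ) {i j k : I} (p : i = j) (q : j = k) (x : V i n) :
    lcastN V n q (lcastN V n p x) = lcastN V n (p.trans q) x := by subst p; subst q; rfl

@[simp] lemma lcastN_inj (n : ℕ) {i j : I} (p q : i = j) (x y : V i n) :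
    (lcastN V n p x = lcastN V n q y) ↔ x = y := by subst p; rfl

lemma lcastN_nat (m n : ℕ) (F : ∀ i, V i m →ₗ[ℂ] W i n) {i j : I} (hij : i = j)
    (x : V i m) : F j (lcastN V m hij x) = lcastN W n hij (F i x) := by subst hij; rfl

end CastLemmas

/-! ### Trace pairing lemmas -/

section TraceLemmas

variable {A B : Type} [AddCommGroup A] [Module ℂ A] [AddCommGroup B] [Module ℂ B]
    [FiniteDimensional ℂ A] [FiniteDimensional ℂ B]

omit [FiniteDimensional ℂ B] in
lemma trace_pairing_nondeg (f : B →ₗ[ℂ] A)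
    (hf : ∀ g : A →ₗ[ℂ] B, LinearMap.trace ℂ A (f ∘ₗ g) = 0) : f = 0 := by
  ext x
  rw [LinearMap.zero_apply, ← Module.forall_dual_apply_eq_zero_iff ℂ]
  intro ξ
  have h1 : f ∘ₗ dualTensorHom ℂ A B (ξ ⊗ₜ x) = dualTensorHom ℂ A A (ξ ⊗ₜ (f x)) := by
    ext a; simp
  have := hf (dualTensorHom ℂ A B (ξ ⊗ₜ x))
  rwa [h1, LinearMap.trace_eq_contract_apply, contractLeft_apply] at this

lemma exists_trace_rep (ξ : Module.Dual ℂ (A →ₗ[ℂ] B)) :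
    ∃ f : B →ₗ[ℂ] A, ∀ g, ξ g = LinearMap.trace ℂ A (f ∘ₗ g) := by
  let F : (B →ₗ[ℂ] A) →ₗ[ℂ] Module.Dual ℂ (A →ₗ[ℂ] B) :=
    (LinearMap.llcomp ℂ (A →ₗ[ℂ] B) (A →ₗ[ℂ] A) ℂ (LinearMap.trace ℂ A)) ∘ₗ
      (LinearMap.llcomp ℂ A B A)
  have hFapp : ∀ f g, F f g = LinearMap.trace ℂ A (f ∘ₗ g) := fun f g => rfl
  have hinj : Function.Injective F := by
    rw [← LinearMap.ker_eq_bot, LinearMap.ker_eq_bot']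
    intro f hf
    exact trace_pairing_nondeg f (fun g => by
      have := congrFun (congrArg DFunLike.coe hf) g
      simpa [hFapp] using this)
  have hdim : finrank ℂ (B →ₗ[ℂ] A) = finrank ℂ (Module.Dual ℂ (A →ₗ[ℂ] B)) := by
    rw [Subspace.dual_finrank_eq, Module.finrank_linearMap, Module.finrank_linearMap, mul_comm]
  obtain ⟨f, hf⟩ := (LinearMap.injective_iff_surjective_of_finrank_eq_finrank hdim).mp hinj ξ
  exact ⟨f, fun g => by rw [← hf]; rfl⟩

end TraceLemmas

lemma exists_trace_rep_pi {ι : Type} [Fintype ι] [DecidableEq ι]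
    (A B : ι → Type) [∀ i, AddCommGroup (A i)] [∀ i, Module ℂ (A i)]
    [∀ i, AddCommGroup (B i)] [∀ i, Module ℂ (B i)]
    [∀ i, FiniteDimensional ℂ (A i)] [∀ i, FiniteDimensional ℂ (B i)]
    (Ξ : Module.Dual ℂ (∀ i, A i →ₗ[ℂ] B i)) :
    ∃ f : ∀ i, B i →ₗ[ℂ] A i, ∀ g, Ξ g = ∑ i, LinearMap.trace ℂ (A i) (f i ∘ₗ g i) := by
  have hsingle : ∀ i, ∃ fi : B i →ₗ[ℂ] A i,
      ∀ gi, Ξ (Pi.single i gi) = LinearMap.trace ℂ (A i) (fi ∘ₗ gi) := by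
    intro i
    exact exists_trace_rep (Ξ ∘ₗ LinearMap.single ℂ (fun j => A j →ₗ[ℂ] B j) i)
  choose f hf using hsingle
  refine ⟨f, fun g => ?_⟩
  have hg : g = ∑ i, Pi.single i (g i) := by
    ext j; rw [Finset.sum_apply]
    simp [Pi.single_apply]
  conv_lhs => rw [hg]
  rw [map_sum]
  exact Finset.sum_congr rfl fun i _ => hf i (g i)

set_option maxHeartbeats 3000000 in
/-- (`N = 2`, distinguished vertex `∞`.)  Under `θ'`-stability of both
`A`-modules, the composite of `∂₁ : E(V₀,W₁) → L(V₀,W₂)` with the projection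
`L(V₀,W₂) → ⊕_{i ≠ ∞} Hom(V_{i,0}, W_{i,2})` is surjective. -/
theorem stmt15
    {I H : Type} [Fintype I] [Fintype H] [DecidableEq I]
    (inf : I)
    (s t : H → I) (bar : H → H)
    (bar_invol : ∀ h, bar (bar h) = h) (bar_ne : ∀ h, bar h ≠ h)
    (s_bar : ∀ h, s (bar h) = t h) (t_bar : ∀ h, t (bar h) = s h)
    (eps : H → ℤ) (eps_pm : ∀ h, eps h = 1 ∨ eps h = -1)
    (eps_bar : ∀ h, eps (bar h) = - eps h)
    (V W : I → ℕ → Type)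
    [∀ i n, AddCommGroup (V i n)] [∀ i n, Module ℂ (V i n)]
    [∀ i n, FiniteDimensional ℂ (V i n)]
    [∀ i n, AddCommGroup (W i n)] [∀ i n, Module ℂ (W i n)]
    [∀ i n, FiniteDimensional ℂ (W i n)]
    (aV : ∀ (h : H) (n : ℕ), V (s h) n →ₗ[ℂ] V (t h) (n + 1))
    (eV : ∀ (i : I) (n : ℕ), V i n →ₗ[ℂ] V i (n + 1))
    (aW : ∀ (h : H) (n : ℕ), W (s h) n →ₗ[ℂ] W (t h) (n + 1))
    (eW : ∀ (i : I) (n : ℕ), W i n →ₗ[ℂ] W i (n + 1))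
    -- (R1) for V and W (N = 2, so only n = 0)
    (hR1V : ∀ (k : I) (n : ℕ), n + 2 ≤ 2 →
      (∑ h : H, if hk : s h = k then
        (eps h : ℂ) • ((lcastN V (n + 2) ((t_bar h).trans hk)).toLinearMap
          ∘ₗ aV (bar h) (n + 1) ∘ₗ (lcastN V (n + 1) (s_bar h)).symm.toLinearMap
          ∘ₗ aV h n ∘ₗ (lcastN V n hk).symm.toLinearMap) else 0) = 0)
    (hR1W : ∀ (k : I) (n : ℕ), n + 2 ≤ 2 →
      (∑ h : H, if hk : s h = k then
        (eps h : ℂ) • ((lcastN W (n + 2) ((t_bar h).trans hk)).toLinearMap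
          ∘ₗ aW (bar h) (n + 1) ∘ₗ (lcastN W (n + 1) (s_bar h)).symm.toLinearMap
          ∘ₗ aW h n ∘ₗ (lcastN W n hk).symm.toLinearMap) else 0) = 0)
    -- (R2) for V and W
    (hR2V : ∀ (h : H) (n : ℕ), n + 2 ≤ 2 →
      eV (t h) (n + 1) ∘ₗ aV h n = aV h (n + 1) ∘ₗ eV (s h) n)
    (hR2W : ∀ (h : H) (n : ℕ), n + 2 ≤ 2 →
      eW (t h) (n + 1) ∘ₗ aW h n = aW h (n + 1) ∘ₗ eW (s h) n)
    -- the e^V are invertible, with inverses eVinv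
    (eVinv : ∀ (i : I) (n : ℕ), V i (n + 1) →ₗ[ℂ] V i n)
    (hinv : ∀ (i : I) (n : ℕ), n + 1 ≤ 2 →
      eVinv i n ∘ₗ eV i n = LinearMap.id ∧ eV i n ∘ₗ eVinv i n = LinearMap.id)
    -- dimension hypotheses
    (hdim : ∀ i, ∀ n ≤ 2, finrank ℂ (V i n) = finrank ℂ (W i n))
    (hdiminf : ∀ n ≤ 2, finrank ℂ (V inf n) = 1)
    -- the linear functional θ' (given by its coefficients), with θ'(dim V) = 0
    (θc : I → ℕ → ℚ)
    (hθV : thetaVal θc (fun i n => (finrank ℂ (V i n) : ℤ)) = 0)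
    -- θ'-stability of V
    (hVstab : ∀ M : ∀ i n, Submodule ℂ (V i n),
      (∀ (h : H) (n : ℕ), n + 1 ≤ 2 → (M (s h) n).map (aV h n) ≤ M (t h) (n + 1)) →
      (∀ (i : I) (n : ℕ), n + 1 ≤ 2 → (M i n).map (eV i n) ≤ M i (n + 1)) →
      (∃ i, ∃ n ≤ 2, M i n ≠ ⊥) → (∃ i, ∃ n ≤ 2, M i n ≠ ⊤) →
      0 < thetaVal θc (fun i n => (finrank ℂ (M i n) : ℤ)))
    -- θ'-stability of W
    (hWstab : ∀ M : ∀ i n, Submodule ℂ (W i n),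
      (∀ (h : H) (n : ℕ), n + 1 ≤ 2 → (M (s h) n).map (aW h n) ≤ M (t h) (n + 1)) →
      (∀ (i : I) (n : ℕ), n + 1 ≤ 2 → (M i n).map (eW i n) ≤ M i (n + 1)) →
      (∃ i, ∃ n ≤ 2, M i n ≠ ⊥) → (∃ i, ∃ n ≤ 2, M i n ≠ ⊤) →
      0 < thetaVal θc (fun i n => (finrank ℂ (M i n) : ℤ))) :
    -- ∂₁ followed by the projection away from the vertex ∞ is surjective
    ∀ g : ∀ i, V i 0 →ₗ[ℂ] W i 2,
      ∃ ψ : ∀ h, V (s h) 0 →ₗ[ℂ] W (t h) 1,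
        ∀ i, i ≠ inf →
          d1 s t bar s_bar t_bar eps V W aV aW eW eVinv ψ i = g i := by
  classical
  -- the packaged linear map `D`
  let D : (∀ h, V (s h) 0 →ₗ[ℂ] W (t h) 1) →ₗ[ℂ]
      (∀ i : {i : I // i ≠ inf}, V i.1 0 →ₗ[ℂ] W i.1 2) :=
    { toFun := fun ψ i => d1 s t bar s_bar t_bar eps V W aV aW eW eVinv ψ i.1
      map_add' := by
        intro ψ χ; funext i
        show d1 s t bar s_bar t_bar eps V W aV aW eW eVinv (ψ + χ) i.1 = _
        simp only [d1, Pi.add_apply]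
        rw [← Finset.sum_add_distrib]
        refine Finset.sum_congr rfl fun h _ => ?_
        by_cases hk : t h = i.1
        · rw [dif_pos hk, dif_pos hk, dif_pos hk]
          simp only [LinearMap.add_comp, LinearMap.comp_add, smul_add]
          abel
        · rw [dif_neg hk, dif_neg hk, dif_neg hk, add_zero]
      map_smul' := by
        intro c ψ; funext i
        show d1 s t bar s_bar t_bar eps V W aV aW eW eVinv (c • ψ) i.1 = _
        simp only [d1, Pi.smul_apply, RingHom.id_apply]
        rw [Finset.smul_sum]
        refine Finset.sum_congr rfl fun h _ => ?_
        by_cases hk : t h = i.1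
        · rw [dif_pos hk, dif_pos hk]
          simp only [LinearMap.comp_smul, LinearMap.smul_comp, LinearMap.comp_add,
            LinearMap.add_comp, smul_add]
          module
        · rw [dif_neg hk, dif_neg hk, smul_zero] }
  suffices hsurj : Function.Surjective D by
    intro g
    obtain ⟨ψ, hψ⟩ := hsurj (fun i => g i.1)
    exact ⟨ψ, fun i hi => congrFun hψ ⟨i, hi⟩⟩
  by_contra hns
  rw [← LinearMap.range_eq_top] at hns
  obtain ⟨Ξ, hΞne, hΞann⟩ :=
    Submodule.exists_dual_map_eq_bot_of_lt_top (lt_top_iff_ne_top.mpr hns) inferInstance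
  have hvanish : ∀ ψ, Ξ (D ψ) = 0 := by
    intro ψ
    have hmem : Ξ (D ψ) ∈ (LinearMap.range D).map Ξ :=
      Submodule.mem_map_of_mem (LinearMap.mem_range_self D ψ)
    rw [hΞann] at hmem
    simpa using hmem
  obtain ⟨f, hfrep⟩ := exists_trace_rep_pi (fun i : {i : I // i ≠ inf} => V i.1 0)
    (fun i : {i : I // i ≠ inf} => W i.1 2) Ξ
  -- the dual datum φ
  set φ : ∀ i, W i 2 →ₗ[ℂ] V i 0 := fun i => if hi : i = inf then 0 else f ⟨i, hi⟩ with hφdef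
  have hφinf : φ inf = 0 := dif_pos rfl
  have hφne : ∃ i₀, ∃ _ : i₀ ≠ inf, φ i₀ ≠ 0 := by
    by_contra hall
    push_neg at hall
    apply hΞne
    have hf0 : ∀ j : {i : I // i ≠ inf}, f j = 0 := by
      intro j
      have hj := hall j.1 j.2
      simp only [hφdef] at hj
      rwa [dif_neg j.2] at hj
    apply LinearMap.ext
    intro gg
    rw [hfrep gg]
    simp [hf0]
  have hvanishI : ∀ ψ, ∑ i : I, LinearMap.trace ℂ (V i 0)
      (φ i ∘ₗ d1 s t bar s_bar t_bar eps V W aV aW eW eVinv ψ i) = 0 := by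
    intro ψ
    rw [← Finset.add_sum_erase Finset.univ _ (Finset.mem_univ inf)]
    have h1 : LinearMap.trace ℂ (V inf 0)
        (φ inf ∘ₗ d1 s t bar s_bar t_bar eps V W aV aW eW eVinv ψ inf) = 0 := by
      rw [hφinf, LinearMap.zero_comp, map_zero]
    rw [h1, zero_add]
    have h2 : ∑ i ∈ Finset.univ.erase inf, LinearMap.trace ℂ (V i 0)
          (φ i ∘ₗ d1 s t bar s_bar t_bar eps V W aV aW eW eVinv ψ i)
        = ∑ i : {i : I // i ≠ inf}, LinearMap.trace ℂ (V i.1 0)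
          (φ i.1 ∘ₗ d1 s t bar s_bar t_bar eps V W aV aW eW eVinv ψ i.1) :=
      Finset.sum_subtype _ (fun x => by simp) _
    rw [h2]
    have h3 : ∀ i : {i : I // i ≠ inf}, φ i.1 = f i := fun i => by
      simp only [hφdef]; rw [dif_neg i.2]
    calc ∑ i : {i : I // i ≠ inf}, LinearMap.trace ℂ (V i.1 0)
          (φ i.1 ∘ₗ d1 s t bar s_bar t_bar eps V W aV aW eW eVinv ψ i.1)
        = Ξ (D ψ) := by
          rw [hfrep (D ψ)]
          exact Finset.sum_congr rfl fun i _ => by rw [h3 i]; rfl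
      _ = 0 := hvanish ψ
  have hP : ∀ ψ : (∀ h, V (s h) 0 →ₗ[ℂ] W (t h) 1),
      ∑ i : I, LinearMap.trace ℂ (V i 0)
        (φ i ∘ₗ d1 s t bar s_bar t_bar eps V W aV aW eW eVinv ψ i)
      = ∑ h : H, (eps h : ℂ) • LinearMap.trace ℂ (V (t h) 0) (φ (t h) ∘ₗ
          ((aW h 1 ∘ₗ (lcastN W 1 (t_bar h)).toLinearMap ∘ₗ ψ (bar h)
            + eW (t h) 1 ∘ₗ ψ h ∘ₗ eVinv (s h) 0 ∘ₗ (lcastN V 1 (t_bar h)).toLinearMap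
                ∘ₗ aV (bar h) 0)
           ∘ₗ (lcastN V 0 (s_bar h)).symm.toLinearMap)) := by
    intro ψ
    have step1 : ∀ i : I, LinearMap.trace ℂ (V i 0)
        (φ i ∘ₗ d1 s t bar s_bar t_bar eps V W aV aW eW eVinv ψ i)
        = ∑ h : H, (if hk : t h = i then (eps h : ℂ) • LinearMap.trace ℂ (V i 0)
            (φ i ∘ₗ ((lcastN W 2 hk).toLinearMap ∘ₗ
              (aW h 1 ∘ₗ (lcastN W 1 (t_bar h)).toLinearMap ∘ₗ ψ (bar h)
                + eW (t h) 1 ∘ₗ ψ h ∘ₗ eVinv (s h) 0 ∘ₗ (lcastN V 1 (t_bar h)).toLinearMap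
                    ∘ₗ aV (bar h) 0)
              ∘ₗ (lcastN V 0 ((s_bar h).trans hk)).symm.toLinearMap)) else 0) := by
      intro i
      have hL : ∀ X : V i 0 →ₗ[ℂ] W i 2, LinearMap.trace ℂ (V i 0) (φ i ∘ₗ X)
          = ((LinearMap.trace ℂ (V i 0)) ∘ₗ
              (LinearMap.llcomp ℂ (V i 0) (W i 2) (V i 0) (φ i))) X := fun _ => rfl
      rw [hL]
      simp only [d1]
      rw [map_sum]
      refine Finset.sum_congr rfl fun h _ => ?_
      by_cases hk : t h = i
      · rw [dif_pos hk, dif_pos hk, map_smul, ← hL]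
      · rw [dif_neg hk, dif_neg hk, map_zero]
    rw [Finset.sum_congr rfl fun i _ => step1 i, Finset.sum_comm]
    refine Finset.sum_congr rfl fun h _ => ?_
    rw [Fintype.sum_dite_eq]
    rfl
  have hnat_phi : ∀ (i j : I) (hij : i = j) (x : W i 2),
      φ j (lcastN W 2 hij x) = lcastN V 0 hij (φ i x) :=
    fun i j hij x => lcastN_nat W V 2 0 φ hij x
  have hnat_eW1 : ∀ (i j : I) (hij : i = j) (x : W i 1),
      eW j 1 (lcastN W 1 hij x) = lcastN W 2 hij (eW i 1 x) :=
    fun i j hij x => lcastN_nat W W 1 2 (fun i => eW i 1) hij x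
  have hnat_eVinv : ∀ (i j : I) (hij : i = j) (x : V i 1),
      eVinv j 0 (lcastN V 1 hij x) = lcastN V 0 hij (eVinv i 0 x) :=
    fun i j hij x => lcastN_nat V V 1 0 (fun i => eVinv i 0) hij x
  have hCLEAN' : ∀ h₀ : H,
      φ (t (bar h₀)) ∘ₗ aW (bar h₀) 1
      = eVinv (t (bar h₀)) 0 ∘ₗ aV (bar h₀) 0 ∘ₗ φ (s (bar h₀)) ∘ₗ eW (s (bar h₀)) 1 := by
    intro h₀
    have hne : bar h₀ ≠ h₀ := bar_ne h₀
    have hb : h₀ = bar (bar h₀) := (bar_invol h₀).symm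
    set ψu : (V (s h₀) 0 →ₗ[ℂ] W (t h₀) 1) → ∀ h, V (s h) 0 →ₗ[ℂ] W (t h) 1 :=
      fun u h' => if hh : h₀ = h' then
        (lcastN W 1 (congrArg t hh)).toLinearMap ∘ₗ u
          ∘ₗ (lcastN V 0 (congrArg s hh)).symm.toLinearMap else 0 with hψu
    have hψu0 : ∀ u h', h₀ ≠ h' → ψu u h' = 0 := fun u h' hh => dif_neg hh
    have hψuh₀ : ∀ u, ψu u h₀ = u := fun u => dif_pos rfl
    have hψubb : ∀ u, ψu u (bar (bar h₀)) =
        (lcastN W 1 (congrArg t hb)).toLinearMap ∘ₗ u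
          ∘ₗ (lcastN V 0 (congrArg s hb)).symm.toLinearMap := fun u => dif_pos hb
    set X2 : W (t h₀) 1 →ₗ[ℂ] V (s h₀) 0 :=
      (eVinv (s h₀) 0 ∘ₗ (lcastN V 1 (t_bar h₀)).toLinearMap ∘ₗ aV (bar h₀) 0
        ∘ₗ (lcastN V 0 (s_bar h₀)).symm.toLinearMap) ∘ₗ φ (t h₀) ∘ₗ eW (t h₀) 1 with hX2
    set X1 : W (t h₀) 1 →ₗ[ℂ] V (s h₀) 0 :=
      ((lcastN V 0 (congrArg s hb)).symm.toLinearMap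
        ∘ₗ (lcastN V 0 (s_bar (bar h₀))).symm.toLinearMap)
        ∘ₗ φ (t (bar h₀)) ∘ₗ aW (bar h₀) 1
        ∘ₗ (lcastN W 1 (t_bar (bar h₀))).toLinearMap
        ∘ₗ (lcastN W 1 (congrArg t hb)).toLinearMap with hX1
    have hTr : ∀ u : V (s h₀) 0 →ₗ[ℂ] W (t h₀) 1,
        (eps h₀ : ℂ) • LinearMap.trace ℂ (V (s h₀) 0) (X2 ∘ₗ u)
        + (eps (bar h₀) : ℂ) • LinearMap.trace ℂ (V (s h₀) 0) (X1 ∘ₗ u) = 0 := by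
      intro u
      have h0 := hvanishI (ψu u)
      rw [hP (ψu u)] at h0
      rw [← Finset.add_sum_erase Finset.univ _ (Finset.mem_univ h₀),
        ← Finset.add_sum_erase (Finset.univ.erase h₀) _
          (Finset.mem_erase.mpr ⟨hne, Finset.mem_univ (bar h₀)⟩)] at h0
      have hrest : ∑ h ∈ (Finset.univ.erase h₀).erase (bar h₀),
          (eps h : ℂ) • LinearMap.trace ℂ (V (t h) 0) (φ (t h) ∘ₗ
          ((aW h 1 ∘ₗ (lcastN W 1 (t_bar h)).toLinearMap ∘ₗ ψu u (bar h)
            + eW (t h) 1 ∘ₗ ψu u h ∘ₗ eVinv (s h) 0 ∘ₗ (lcastN V 1 (t_bar h)).toLinearMap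
                ∘ₗ aV (bar h) 0)
           ∘ₗ (lcastN V 0 (s_bar h)).symm.toLinearMap)) = 0 := by
        refine Finset.sum_eq_zero fun h hmem => ?_
        rw [Finset.mem_erase, Finset.mem_erase] at hmem
        have e1 : ψu u h = 0 := hψu0 u h (fun e => hmem.2.1 e.symm)
        have e2 : ψu u (bar h) = 0 := hψu0 u (bar h)
          (fun e => hmem.1 (((congrArg bar e).trans (bar_invol h)).symm))
        rw [e1, e2]
        simp only [LinearMap.comp_zero, LinearMap.zero_comp, add_zero, zero_add,
          LinearMap.zero_comp, map_zero, smul_zero]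
      rw [hrest, add_zero] at h0
      rw [hψu0 u (bar h₀) (Ne.symm hne), hψuh₀ u, hψubb u] at h0
      have hT2 : LinearMap.trace ℂ (V (t h₀) 0) (φ (t h₀) ∘ₗ
          ((aW h₀ 1 ∘ₗ (lcastN W 1 (t_bar h₀)).toLinearMap ∘ₗ 0
            + eW (t h₀) 1 ∘ₗ u ∘ₗ eVinv (s h₀) 0 ∘ₗ (lcastN V 1 (t_bar h₀)).toLinearMap
                ∘ₗ aV (bar h₀) 0)
           ∘ₗ (lcastN V 0 (s_bar h₀)).symm.toLinearMap))
          = LinearMap.trace ℂ (V (s h₀) 0) (X2 ∘ₗ u) := by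
        rw [LinearMap.comp_zero, LinearMap.comp_zero, zero_add]
        rw [show φ (t h₀) ∘ₗ
          ((eW (t h₀) 1 ∘ₗ u ∘ₗ eVinv (s h₀) 0 ∘ₗ (lcastN V 1 (t_bar h₀)).toLinearMap
                ∘ₗ aV (bar h₀) 0)
           ∘ₗ (lcastN V 0 (s_bar h₀)).symm.toLinearMap)
          = (φ (t h₀) ∘ₗ eW (t h₀) 1 ∘ₗ u) ∘ₗ
            (eVinv (s h₀) 0 ∘ₗ (lcastN V 1 (t_bar h₀)).toLinearMap ∘ₗ aV (bar h₀) 0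
              ∘ₗ (lcastN V 0 (s_bar h₀)).symm.toLinearMap) from rfl]
        rw [LinearMap.trace_comp_comm']
        congr 1
      have hT1 : LinearMap.trace ℂ (V (t (bar h₀)) 0) (φ (t (bar h₀)) ∘ₗ
          ((aW (bar h₀) 1 ∘ₗ (lcastN W 1 (t_bar (bar h₀))).toLinearMap ∘ₗ
              ((lcastN W 1 (congrArg t hb)).toLinearMap ∘ₗ u
                ∘ₗ (lcastN V 0 (congrArg s hb)).symm.toLinearMap)
            + eW (t (bar h₀)) 1 ∘ₗ 0 ∘ₗ eVinv (s (bar h₀)) 0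
                ∘ₗ (lcastN V 1 (t_bar (bar h₀))).toLinearMap ∘ₗ aV (bar (bar h₀)) 0)
           ∘ₗ (lcastN V 0 (s_bar (bar h₀))).symm.toLinearMap))
          = LinearMap.trace ℂ (V (s h₀) 0) (X1 ∘ₗ u) := by
        simp only [LinearMap.zero_comp, LinearMap.comp_zero, add_zero]
        rw [show φ (t (bar h₀)) ∘ₗ
          ((aW (bar h₀) 1 ∘ₗ (lcastN W 1 (t_bar (bar h₀))).toLinearMap ∘ₗ
              ((lcastN W 1 (congrArg t hb)).toLinearMap ∘ₗ u
                ∘ₗ (lcastN V 0 (congrArg s hb)).symm.toLinearMap))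
           ∘ₗ (lcastN V 0 (s_bar (bar h₀))).symm.toLinearMap)
          = (φ (t (bar h₀)) ∘ₗ aW (bar h₀) 1 ∘ₗ (lcastN W 1 (t_bar (bar h₀))).toLinearMap
              ∘ₗ (lcastN W 1 (congrArg t hb)).toLinearMap ∘ₗ u) ∘ₗ
            ((lcastN V 0 (congrArg s hb)).symm.toLinearMap
              ∘ₗ (lcastN V 0 (s_bar (bar h₀))).symm.toLinearMap) from rfl]
        rw [LinearMap.trace_comp_comm']
        congr 1
      rw [hT2, hT1] at h0
      exact h0
    have heps : (eps h₀ : ℂ) ≠ 0 := by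
      rcases eps_pm h₀ with h | h <;> rw [h] <;> norm_num
    have hXeq : X2 = X1 := by
      rw [← sub_eq_zero]
      apply trace_pairing_nondeg
      intro u
      have := hTr u
      rw [eps_bar h₀] at this
      push_cast at this
      rw [neg_smul, ← sub_eq_add_neg, ← smul_sub, smul_eq_zero] at this
      rcases this with h | h
      · exact absurd h heps
      · rw [LinearMap.sub_comp, map_sub]
        exact sub_eq_zero.mpr (sub_eq_zero.mp h) |>.symm ▸ h
    ext x
    have hx := LinearMap.congr_fun hXeq ((lcastN W 1 (s_bar h₀)) x)
    simp only [hX2, hX1, LinearMap.comp_apply, LinearEquiv.coe_coe, lcastN_symm_apply,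
      hnat_eW1, hnat_phi, hnat_eVinv, lcastN_lcastN, lcastN_self, lcastN_inj] at hx
    simp only [LinearMap.comp_apply]
    exact hx.symm
  have hCLEAN : ∀ g0 : H, φ (t g0) ∘ₗ aW g0 1
      = eVinv (t g0) 0 ∘ₗ aV g0 0 ∘ₗ φ (s g0) ∘ₗ eW (s g0) 1 := by
    intro g0
    have hc := hCLEAN' (bar g0)
    rwa [bar_invol g0] at hc
  -- Part C: the graded submodules built from φ
  set Φ1 : ∀ i, W i 1 →ₗ[ℂ] V i 0 := fun i => φ i ∘ₗ eW i 1 with hΦ1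
  set Φ0 : ∀ i, W i 0 →ₗ[ℂ] V i 0 := fun i => Φ1 i ∘ₗ eW i 0 with hΦ0
  set Bm : ∀ h : H, V (s h) 0 →ₗ[ℂ] V (t h) 0 := fun h => eVinv (t h) 0 ∘ₗ aV h 0 with hBm
  have hK2 : ∀ h, φ (t h) ∘ₗ aW h 1 = Bm h ∘ₗ Φ1 (s h) := by
    intro h; rw [hCLEAN h]; rfl
  have hK1 : ∀ h, Φ1 (t h) ∘ₗ aW h 0 = Bm h ∘ₗ Φ0 (s h) := by
    intro h
    have e1 : Φ1 (t h) ∘ₗ aW h 0 = φ (t h) ∘ₗ (eW (t h) 1 ∘ₗ aW h 0) := rfl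
    rw [e1, hR2W h 0 (by norm_num)]
    calc φ (t h) ∘ₗ (aW h 1 ∘ₗ eW (s h) 0)
        = (φ (t h) ∘ₗ aW h 1) ∘ₗ eW (s h) 0 := rfl
      _ = (Bm h ∘ₗ Φ1 (s h)) ∘ₗ eW (s h) 0 := by rw [hK2 h]
      _ = Bm h ∘ₗ Φ0 (s h) := rfl
  have heinj : ∀ (i : I) (n : ℕ), n + 1 ≤ 2 → Function.Injective (eV i n) := by
    intro i n hn x y hxy
    have h1 := (hinv i n hn).1
    have h2 : eVinv i n (eV i n x) = eVinv i n (eV i n y) := by rw [hxy]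
    rwa [← LinearMap.comp_apply, h1, ← LinearMap.comp_apply (eVinv i n), h1,
      LinearMap.id_apply, LinearMap.id_apply] at h2
  have haV0 : ∀ h : H, aV h 0 = eV (t h) 0 ∘ₗ Bm h := by
    intro h
    have h2 := (hinv (t h) 0 (by norm_num)).2
    calc aV h 0 = (eV (t h) 0 ∘ₗ eVinv (t h) 0) ∘ₗ aV h 0 := by rw [h2, LinearMap.id_comp]
      _ = eV (t h) 0 ∘ₗ Bm h := rfl
  set SM : ∀ i n, Submodule ℂ (V i n) := fun i n => match n with
    | 0 => LinearMap.range (Φ0 i)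
    | 1 => (LinearMap.range (Φ1 i)).map (eV i 0)
    | 2 => ((LinearMap.range (φ i)).map (eV i 0)).map (eV i 1)
    | _ + 3 => ⊥ with hSM
  set TM : ∀ i n, Submodule ℂ (W i n) := fun i n => match n with
    | 0 => LinearMap.ker (Φ0 i)
    | 1 => LinearMap.ker (Φ1 i)
    | 2 => LinearMap.ker (φ i)
    | _ + 3 => ⊤ with hTM
  have hSMa : ∀ (h : H) (n : ℕ), n + 1 ≤ 2 → (SM (s h) n).map (aV h n) ≤ SM (t h) (n + 1) := by
    intro h n hn
    have hn' : n ≤ 1 := by omega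
    interval_cases n
    · show (LinearMap.range (Φ0 (s h))).map (aV h 0)
        ≤ (LinearMap.range (Φ1 (t h))).map (eV (t h) 0)
      rw [haV0 h, Submodule.map_comp]
      apply Submodule.map_mono
      rw [← LinearMap.range_comp, ← hK1 h]
      exact LinearMap.range_comp_le_range _ _
    · show ((LinearMap.range (Φ1 (s h))).map (eV (s h) 0)).map (aV h 1)
        ≤ ((LinearMap.range (φ (t h))).map (eV (t h) 0)).map (eV (t h) 1)
      rw [← Submodule.map_comp]
      have hcomm : aV h 1 ∘ₗ eV (s h) 0 = (eV (t h) 1 ∘ₗ eV (t h) 0) ∘ₗ Bm h := by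
        rw [← hR2V h 0 (by norm_num), haV0 h]
        rfl
      rw [hcomm, Submodule.map_comp, Submodule.map_comp]
      refine Submodule.map_mono (Submodule.map_mono ?_)
      rw [← LinearMap.range_comp, ← hK2 h]
      exact LinearMap.range_comp_le_range _ _
  have hSMe : ∀ (i : I) (n : ℕ), n + 1 ≤ 2 → (SM i n).map (eV i n) ≤ SM i (n + 1) := by
    intro i n hn
    have hn' : n ≤ 1 := by omega
    interval_cases n
    · show (LinearMap.range (Φ0 i)).map (eV i 0) ≤ (LinearMap.range (Φ1 i)).map (eV i 0)
      exact Submodule.map_mono (LinearMap.range_comp_le_range (eW i 0) (Φ1 i))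
    · show ((LinearMap.range (Φ1 i)).map (eV i 0)).map (eV i 1)
        ≤ ((LinearMap.range (φ i)).map (eV i 0)).map (eV i 1)
      exact Submodule.map_mono (Submodule.map_mono
        (LinearMap.range_comp_le_range (eW i 1) (φ i)))
  have hTMa : ∀ (h : H) (n : ℕ), n + 1 ≤ 2 → (TM (s h) n).map (aW h n) ≤ TM (t h) (n + 1) := by
    intro h n hn
    have hn' : n ≤ 1 := by omega
    interval_cases n
    · show (LinearMap.ker (Φ0 (s h))).map (aW h 0) ≤ LinearMap.ker (Φ1 (t h))
      rintro x ⟨y, hy, rfl⟩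
      rw [LinearMap.mem_ker]
      have hy0 : Φ0 (s h) y = 0 := hy
      calc Φ1 (t h) ((aW h 0) y) = (Φ1 (t h) ∘ₗ aW h 0) y := rfl
        _ = (Bm h ∘ₗ Φ0 (s h)) y := by rw [hK1 h]
        _ = Bm h (Φ0 (s h) y) := rfl
        _ = 0 := by rw [hy0, map_zero]
    · show (LinearMap.ker (Φ1 (s h))).map (aW h 1) ≤ LinearMap.ker (φ (t h))
      rintro x ⟨y, hy, rfl⟩
      rw [LinearMap.mem_ker]
      have hy0 : Φ1 (s h) y = 0 := hy
      calc φ (t h) ((aW h 1) y) = (φ (t h) ∘ₗ aW h 1) y := rfl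
        _ = (Bm h ∘ₗ Φ1 (s h)) y := by rw [hK2 h]
        _ = Bm h (Φ1 (s h) y) := rfl
        _ = 0 := by rw [hy0, map_zero]
  have hTMe : ∀ (i : I) (n : ℕ), n + 1 ≤ 2 → (TM i n).map (eW i n) ≤ TM i (n + 1) := by
    intro i n hn
    have hn' : n ≤ 1 := by omega
    interval_cases n
    · show (LinearMap.ker (Φ0 i)).map (eW i 0) ≤ LinearMap.ker (Φ1 i)
      rintro x ⟨y, hy, rfl⟩
      exact hy
    · show (LinearMap.ker (Φ1 i)).map (eW i 1) ≤ LinearMap.ker (φ i)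
      rintro x ⟨y, hy, rfl⟩
      exact hy
  obtain ⟨i₀, hi₀, hφi₀⟩ := hφne
  have hVinf2 : Nontrivial (V inf 2) :=
    Module.nontrivial_of_finrank_pos (R := ℂ) (by rw [hdiminf 2 le_rfl]; norm_num)
  have hWinf2 : Nontrivial (W inf 2) :=
    Module.nontrivial_of_finrank_pos (R := ℂ)
      (by rw [← hdim inf 2 le_rfl, hdiminf 2 le_rfl]; norm_num)
  -- nontriviality of SM and TM
  have hmapinj : ∀ (i : I) (n : ℕ) (hn : n + 1 ≤ 2) (p : Submodule ℂ (V i n)),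
      p ≠ ⊥ → p.map (eV i n) ≠ ⊥ := by
    intro i n hn p hp hb
    obtain ⟨x, hx, hx0⟩ := (Submodule.ne_bot_iff p).mp hp
    have : eV i n x ∈ p.map (eV i n) := Submodule.mem_map_of_mem hx
    rw [hb, Submodule.mem_bot] at this
    exact hx0 (by
      apply heinj i n hn
      rw [this, map_zero])
  have hSbot : SM i₀ 2 ≠ ⊥ := by
    show ((LinearMap.range (φ i₀)).map (eV i₀ 0)).map (eV i₀ 1) ≠ ⊥
    apply hmapinj i₀ 1 (by norm_num)
    apply hmapinj i₀ 0 (by norm_num)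
    rw [Ne, LinearMap.range_eq_bot]
    exact hφi₀
  have hStop : SM inf 2 ≠ ⊤ := by
    show ((LinearMap.range (φ inf)).map (eV inf 0)).map (eV inf 1) ≠ ⊤
    rw [hφinf, LinearMap.range_zero, Submodule.map_bot, Submodule.map_bot]
    exact bot_ne_top
  have hTtop : TM i₀ 2 ≠ ⊤ := by
    show LinearMap.ker (φ i₀) ≠ ⊤
    rw [Ne, LinearMap.ker_eq_top]
    exact hφi₀
  have hTbot : TM inf 2 ≠ ⊥ := by
    show LinearMap.ker (φ inf) ≠ ⊥
    rw [hφinf, LinearMap.ker_zero]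
    exact top_ne_bot
  -- dimension bookkeeping
  have hθW : thetaVal θc (fun i n => (finrank ℂ (W i n) : ℤ)) = 0 := by
    rw [← hθV]
    unfold thetaVal
    refine Finset.sum_congr rfl fun i _ => Finset.sum_congr rfl fun n hn => ?_
    have hd := hdim i n (Nat.lt_succ_iff.mp (Finset.mem_range.mp hn))
    simp [hd]
  have hdimsum : ∀ (i : I) (n : ℕ), n < 3 →
      finrank ℂ (SM i n) + finrank ℂ (TM i n) = finrank ℂ (W i n) := by
    intro i n hn
    interval_cases n
    · exact LinearMap.finrank_range_add_finrank_ker (Φ0 i)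
    · show finrank ℂ ((LinearMap.range (Φ1 i)).map (eV i 0)) + finrank ℂ (LinearMap.ker (Φ1 i))
        = finrank ℂ (W i 1)
      rw [← LinearEquiv.finrank_eq (Submodule.equivMapOfInjective (eV i 0)
        (heinj i 0 (by norm_num)) (LinearMap.range (Φ1 i)))]
      exact LinearMap.finrank_range_add_finrank_ker (Φ1 i)
    · show finrank ℂ (((LinearMap.range (φ i)).map (eV i 0)).map (eV i 1))
        + finrank ℂ (LinearMap.ker (φ i)) = finrank ℂ (W i 2)
      rw [← LinearEquiv.finrank_eq (Submodule.equivMapOfInjective (eV i 1)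
        (heinj i 1 (by norm_num)) ((LinearMap.range (φ i)).map (eV i 0)))]
      rw [← LinearEquiv.finrank_eq (Submodule.equivMapOfInjective (eV i 0)
        (heinj i 0 (by norm_num)) (LinearMap.range (φ i)))]
      exact LinearMap.finrank_range_add_finrank_ker (φ i)
  have hθsum : thetaVal θc (fun i n => (finrank ℂ (SM i n) : ℤ))
      + thetaVal θc (fun i n => (finrank ℂ (TM i n) : ℤ)) = 0 := by
    rw [← hθW]
    unfold thetaVal
    rw [← Finset.sum_add_distrib]
    refine Finset.sum_congr rfl fun i _ => ?_
    rw [← Finset.sum_add_distrib]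
    refine Finset.sum_congr rfl fun n hn => ?_
    have hd := hdimsum i n (Finset.mem_range.mp hn)
    have hd' : (finrank ℂ (SM i n) : ℚ) + (finrank ℂ (TM i n) : ℚ)
        = (finrank ℂ (W i n) : ℚ) := by exact_mod_cast congrArg (Nat.cast (R := ℚ)) hd
    push_cast
    rw [← mul_add, hd']
  have hSpos := hVstab SM hSMa hSMe ⟨i₀, 2, le_rfl, hSbot⟩ ⟨inf, 2, le_rfl, hStop⟩
  have hTpos := hWstab TM hTMa hTMe ⟨inf, 2, le_rfl, hTbot⟩ ⟨i₀, 2, le_rfl, hTtop⟩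
  linarith
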